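/- In Clear Mastermind restricted to the case k = n with the secret promised to be a permutation of {1,…,n} and with feedback reduced to per-position correct/incorrect marks, the codebreaker cannot guarantee finding the secret in fewer than n rounds; i.e., G(n) ≥ n for all n ≥ 1. -/

import Mathlib

attribute [local instance] Classical.propDecidable

namespace PG

variable {n : ℕ}

/-- Per-position exact-match feedback: `true` (✓) at `i` iff `x i = y i`. -/
def tau (x y : Fin n → Fin n) (i : Fin n) : Bool := decide (x i = y i)

/-- A codebreaker strategy in the permutation game. -/
def PStrategy (n : ℕ) : Type :=
  List (Fin n → Bool) → (Fin n → Fin n)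

/-- Feedback history after `r` rounds against secret `y`. -/
def phist (S : PStrategy n) (y : Fin n → Fin n) : ℕ → List (Fin n → Bool)
  | 0 => []
  | r + 1 => phist S y r ++ [tau (S (phist S y r)) y]

/-- The guess in round `r` (0-indexed). -/
def pguess (S : PStrategy n) (y : Fin n → Fin n) (r : ℕ) : Fin n → Fin n :=
  S (phist S y r)

/-- `S` wins within `m` rounds: for every secret permutation, some guess among
the first `m` equals the secret. -/
def PWinsIn (S : PStrategy n) (m : ℕ) : Prop :=
  ∀ y : Equiv.Perm (Fin n), ∃ r < m, pguess S (⇑y) r = ⇑y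

/-- `Gnum n`: the optimal worst-case number of rounds needed to guess a secret
permutation of `{1,…,n}` with per-position ✓/✗ feedback. -/
noncomputable def Gnum (n : ℕ) : ℕ :=
  sInf {m | ∃ S : PStrategy n, PWinsIn S m}

/-- A history of (guess, feedback) pairs. -/
abbrev Hist (n : ℕ) := List ((Fin n → Fin n) × (Fin n → Bool))

/-- A permutation is consistent with a history iff it satisfies every asserted
equality (✓) and inequality (✗). -/
def Consistent (H : Hist n) (σ : Equiv.Perm (Fin n)) : Prop :=
  ∀ p ∈ H, ∀ i : Fin n, if p.2 i then p.1 i = σ i else p.1 i ≠ σ i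

/-- A permutation satisfies a partial feedback list `g` (on the first
`g.length` positions) for guess `x`. -/
def PrefixOK (x : Fin n → Fin n) (g : List Bool) (σ : Equiv.Perm (Fin n)) : Prop :=
  ∀ (j : ℕ) (hg : j < g.length) (hn : j < n),
    if g.get ⟨j, hg⟩ then x ⟨j, hn⟩ = σ ⟨j, hn⟩ else x ⟨j, hn⟩ ≠ σ ⟨j, hn⟩

/-- Greedy adversary feedback on the first `j` positions: scanning left to
right, answer ✗ whenever some permutation consistent with the history and the
partial feedback so far remains, otherwise ✓. -/
noncomputable def greedyAux (H : Hist n) (x : Fin n → Fin n) : ℕ → List Bool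
  | 0 => []
  | j + 1 =>
    greedyAux H x j ++
      [if ∃ σ : Equiv.Perm (Fin n),
          Consistent H σ ∧ PrefixOK x (greedyAux H x j ++ [false]) σ
        then false else true]

/-- The full greedy feedback vector for guess `x` given history `H`. -/
noncomputable def gfb (H : Hist n) (x : Fin n → Fin n) (i : Fin n) : Bool :=
  (greedyAux H x n).getD i.val true

/-- The history after `r` rounds when the guesses are `xs 0, xs 1, …` and the
codemaker answers greedily. -/
noncomputable def greedyHist (xs : ℕ → Fin n → Fin n) : ℕ → Hist n
  | 0 => []
  | r + 1 => greedyHist xs r ++ [(xs r, gfb (greedyHist xs r) (xs r))]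

/-- The 0/1 tracking matrix of a history: entry `(i, j)` is `0` iff some guess
placed value `j` at position `i` and received answer ✗. -/
noncomputable def track (H : Hist n) : Matrix (Fin n) (Fin n) ℕ :=
  fun i j => if ∃ p ∈ H, p.1 i = j ∧ p.2 i = false then 0 else 1

end PG

/-!
The codemaker keeps, for every position `i`, a set `Z i` of values known to be wrong there; the
secrets still possible are the permutations avoiding all of them. Answering a guess, she marks ✗ on
an inclusion-maximal set of positions whose guessed values can be forbidden simultaneously; by
maximality every surviving secret agrees with the guess elsewhere, so the answer is the true one for
each of them. After `r` rounds every `Z i` has at most `r` elements, and as long as `r ≤ n - 2` this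
leaves at least two surviving secrets: from one of them, redirect each position to a second allowed
value and follow a cycle of the resulting map. With two secrets left some mark is ✗, so the guess
itself is eliminated, and a surviving secret is never guessed in the first `n - 1` rounds.
-/

open Equiv Function

theorem Function.nonempty_periodicPts {α : Type*} [Finite α] [Nonempty α] (f : α → α) :
    (periodicPts f).Nonempty := by
  obtain ⟨a, b, hab, h⟩ :=
    Finite.exists_ne_map_eq_of_infinite fun k : ℕ => f^[k] (Classical.arbitrary α)
  wlog hlt : a < b generalizing a b
  · exact this b a hab.symm h.symm (by omega)
  refine ⟨f^[a] (Classical.arbitrary α), mk_mem_periodicPts (Nat.sub_pos_of_lt hlt) ?_⟩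
  rw [IsPeriodicPt, IsFixedPt, ← iterate_add_apply, Nat.sub_add_cancel hlt.le]
  exact h.symm

theorem Equiv.Perm.exists_ne_one_forall_apply_eq_or_eq {α : Type*} [Finite α] [Nonempty α]
    {f : α → α} (hf : ∀ a, f a ≠ a) : ∃ g : Perm α, g ≠ 1 ∧ ∀ a, g a = a ∨ g a = f a := by
  classical
  obtain ⟨p, hp⟩ := nonempty_periodicPts f
  let g : Perm α := Perm.ofSubtype ((bijOn_periodicPts f).equiv f)
  have hg : ∀ a ∈ periodicPts f, g a = f a := fun a ha => Perm.ofSubtype_apply_of_mem _ ha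
  refine ⟨g, fun h => hf p ?_, fun a => ?_⟩
  · rw [← hg p hp, h, Perm.one_apply]
  · by_cases ha : a ∈ periodicPts f
    · exact .inr (hg a ha)
    · exact .inl (Perm.ofSubtype_apply_of_not_mem _ ha)

namespace PG

section Avoiding

variable {α : Type*}

def Avoiding (Z : α → Finset α) : Set (Perm α) := {σ | ∀ a, σ a ∉ Z a}

variable [DecidableEq α]

def forbid (Z : α → Finset α) (x : α → α) (F : Finset α) (a : α) : Finset α :=
  if a ∈ F then insert (x a) (Z a) else Z a

variable {Z : α → Finset α} {x : α → α} {F : Finset α} {σ : Perm α}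

theorem mem_avoiding_forbid :
    σ ∈ Avoiding (forbid Z x F) ↔ σ ∈ Avoiding Z ∧ ∀ a ∈ F, σ a ≠ x a := by
  simp only [Avoiding, forbid, Set.mem_ofPred_eq]
  grind

theorem card_forbid_le (a : α) : (forbid Z x F a).card ≤ (Z a).card + 1 := by
  unfold forbid; split_ifs
  exacts [Finset.card_insert_le _ _, Nat.le_succ _]

theorem exists_ne_mem_avoiding [Fintype α] [Nonempty α]
    (hZ : ∀ a, (Z a).card + 2 ≤ Fintype.card α) (hσ : σ ∈ Avoiding Z) :
    ∃ τ ∈ Avoiding Z, τ ≠ σ := by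
  have hb : ∀ a, ∃ b, b ≠ σ a ∧ b ∉ Z a := fun a => by
    obtain ⟨b, -, hb⟩ := Finset.exists_mem_notMem_of_card_lt_card (s := insert (σ a) (Z a))
      (t := Finset.univ) (by grind [Finset.card_insert_le, Finset.card_univ])
    exact ⟨b, by simpa using hb⟩
  choose b hbσ hbZ using hb
  obtain ⟨g, hg1, hg⟩ := Perm.exists_ne_one_forall_apply_eq_or_eq (f := fun a => σ⁻¹ (b a))
    fun a h => hbσ a (by simpa using congrArg σ h)
  refine ⟨σ * g, fun a => ?_, fun h => hg1 (mul_eq_left.mp h)⟩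
  rcases hg a with h | h <;> simp only [Perm.mul_apply, h, Perm.coe_inv, apply_symm_apply]
  exacts [hσ a, hbZ a]

/-- The set of positions answered ✗ by the greedy codemaker. -/
noncomputable def greedyAnswer (Z : α → Finset α) (x : α → α) : Finset α :=
  Classical.epsilon (Maximal fun F => (Avoiding (forbid Z x F)).Nonempty)

variable [Fintype α]

theorem maximal_greedyAnswer (h : (Avoiding Z).Nonempty) :
    Maximal (fun F => (Avoiding (forbid Z x F)).Nonempty) (greedyAnswer Z x) :=
  Classical.epsilon_spec <| (Finite.exists_le_maximal (a := ∅) (by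
    simpa [Set.Nonempty, mem_avoiding_forbid] using h)).imp fun _ => And.right

theorem apply_eq_of_mem_avoiding_greedyAnswer (h : (Avoiding Z).Nonempty)
    (hσ : σ ∈ Avoiding (forbid Z x (greedyAnswer Z x))) {a : α} (ha : a ∉ greedyAnswer Z x) :
    σ a = x a := by
  by_contra hne
  have hins : (Avoiding (forbid Z x (insert a (greedyAnswer Z x)))).Nonempty := by
    refine ⟨σ, mem_avoiding_forbid.mpr ⟨(mem_avoiding_forbid.mp hσ).1, ?_⟩⟩
    grind [mem_avoiding_forbid]
  exact ha ((maximal_greedyAnswer h).2 hins (Finset.subset_insert a _) (Finset.mem_insert_self a _))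

theorem greedyAnswer_nonempty {τ : Perm α} (hσ : σ ∈ Avoiding Z) (hτ : τ ∈ Avoiding Z)
    (hne : σ ≠ τ) : (greedyAnswer Z x).Nonempty := by
  by_contra hF
  rw [Finset.not_nonempty_iff_eq_empty] at hF
  have hmem : ∀ ρ ∈ Avoiding Z, ∀ a, ρ a = x a := fun ρ hρ a =>
    apply_eq_of_mem_avoiding_greedyAnswer ⟨σ, hσ⟩ (by simp [mem_avoiding_forbid, hF, hρ])
      (by simp [hF])
  exact hne (Perm.ext fun a => (hmem σ hσ a).trans (hmem τ hτ a).symm)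

end Avoiding

variable {n : ℕ}

/-- The greedy codemaker's forbidden values and answers after `r` rounds against `S`. -/
noncomputable def adversary (S : PStrategy n) : ℕ → (Fin n → Finset (Fin n)) × List (Fin n → Bool)
  | 0 => (fun _ => ∅, [])
  | r + 1 =>
    let x := S (adversary S r).2
    let F := greedyAnswer (adversary S r).1 x
    (forbid (adversary S r).1 x F, (adversary S r).2 ++ [fun i => decide (i ∉ F)])

variable (S : PStrategy n)

theorem nonempty_avoiding_adversary (r : ℕ) : (Avoiding (adversary S r).1).Nonempty := by
  induction r with
  | zero => exact ⟨1, fun _ => Finset.notMem_empty _⟩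
  | succ r ih => exact (maximal_greedyAnswer ih).1

theorem avoiding_adversary_antitone : Antitone fun r => Avoiding (adversary S r).1 :=
  antitone_nat_of_succ_le fun _ _ hσ => (mem_avoiding_forbid.mp hσ).1

theorem card_adversary_le (r : ℕ) (i : Fin n) : ((adversary S r).1 i).card ≤ r := by
  induction r with
  | zero => simp [adversary]
  | succ r ih => exact (card_forbid_le i).trans (by omega)

theorem phist_eq_of_mem_avoiding {r : ℕ} {σ : Perm (Fin n)}
    (hσ : σ ∈ Avoiding (adversary S r).1) : phist S σ r = (adversary S r).2 := by
  induction r with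
  | zero => rfl
  | succ r ih =>
    have hσr := avoiding_adversary_antitone S r.le_succ hσ
    simp only [phist, adversary, ih hσr, List.append_cancel_left_eq, List.cons.injEq, and_true]
    funext i
    by_cases hi : i ∈ greedyAnswer (adversary S r).1 (S (adversary S r).2)
    · simp [tau, hi, Ne.symm ((mem_avoiding_forbid.mp hσ).2 i hi)]
    · simp [tau, hi, apply_eq_of_mem_avoiding_greedyAnswer ⟨σ, hσr⟩ hσ hi]

theorem pguess_ne_of_mem_avoiding {r : ℕ} (hr : r + 2 ≤ n) {y : Perm (Fin n)}
    (hy : y ∈ Avoiding (adversary S (r + 1)).1) : pguess S y r ≠ y := by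
  have hyr := avoiding_adversary_antitone S r.le_succ hy
  have : Nonempty (Fin n) := ⟨⟨0, by omega⟩⟩
  obtain ⟨τ, hτ, hne⟩ := exists_ne_mem_avoiding
    (fun i => by grind [card_adversary_le S r i, Fintype.card_fin]) hyr
  obtain ⟨i, hi⟩ := greedyAnswer_nonempty (x := S (adversary S r).2) hτ hyr hne
  intro hguess
  rw [pguess, phist_eq_of_mem_avoiding S hyr] at hguess
  exact (mem_avoiding_forbid.mp hy).2 i hi (congrFun hguess i).symm

noncomputable def enumStrategy (n : ℕ) : PStrategy n := fun h =>
  ((Finset.univ : Finset (Perm (Fin n))).toList.getD h.length 1 : Perm (Fin n))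

theorem length_phist (y : Fin n → Fin n) (r : ℕ) : (phist S y r).length = r := by
  induction r with
  | zero => rfl
  | succ r ih => simp [phist, ih]

theorem enumStrategy_wins (n : ℕ) :
    PWinsIn (enumStrategy n) (Fintype.card (Perm (Fin n))) := by
  intro y
  obtain ⟨r, hr, hy⟩ := List.getElem_of_mem (Finset.mem_toList.2 (Finset.mem_univ y))
  refine ⟨r, by simpa using hr, ?_⟩
  simp only [pguess, enumStrategy, length_phist, List.getD_eq_getElem?_getD,
    List.getElem?_eq_getElem hr, Option.getD_some, hy]

end PG

theorem stmt9_general (n : ℕ) : n ≤ PG.Gnum n := by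
  refine le_csInf ⟨_, _, PG.enumStrategy_wins n⟩ fun m ⟨S, hS⟩ => ?_
  by_contra! hmn
  obtain ⟨y, hy⟩ := PG.nonempty_avoiding_adversary S m
  obtain ⟨r, hrm, hr⟩ := hS y
  exact PG.pguess_ne_of_mem_avoiding S (by omega) (PG.avoiding_adversary_antitone S hrm hy) hr

/-- In the permutation guessing game with per-position ✓/✗ feedback, the
codebreaker cannot guarantee success in fewer than `n` rounds: `G(n) ≥ n`. -/
theorem stmt9 (n : ℕ) (hn : 1 ≤ n) : n ≤ PG.Gnum n :=
  stmt9_general n
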